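/- arXiv:1401.0779 — 2 statements merged into one kernel-verified Lean document; each statement's English description precedes it below -/
import Mathlib

section
/- If a(x,u) = ψ_uu/ψ_u, b(x,u) = (2φ_xψ_xu − ψ_uφ_xx)/(φ_xψ_u), and c(x,u) = (φ_xψ_xx − ψ_xφ_xx)/(φ_xψ_u) for smooth φ(x) with φ_x ≠ 0 and smooth ψ(x,u) with ψ_u ≠ 0, then c_uu − a_xx − a_x b + a_u c + c_u a = 0. -/
/-!
Write g = ψ_u, q = φ''/φ' and L f = f_xx − q f_x (`xOperator q f`). Then a g = g_u,
b = 2 g_x / g − q and c g = L ψ. Since q does not depend on u and mixed partials commute, ∂_u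
commutes with L, so differentiating c g = L ψ in u gives c_u g + c g_u = L g and
c_uu g + 2 c_u g_u + c g_uu = L g_u; differentiating a g = g_u gives the analogous relations for
a_u, a_x and a_xx. Multiplied by g, the expression of the theorem is a linear combination of
these relations.
-/

/-- partial derivative in the first (x) variable -/
noncomputable def pX (f : ℝ → ℝ → ℝ) : ℝ → ℝ → ℝ := fun x u => deriv (fun t => f t u) x
/-- partial derivative in the second (u) variable -/
noncomputable def pU (f : ℝ → ℝ → ℝ) : ℝ → ℝ → ℝ := fun x u => deriv (fun v => f x v) u

open Function

section PartialDerivatives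

variable {f g : ℝ → ℝ → ℝ}

lemma pX_mul (hf : ∀ u, Differentiable ℝ (fun t => f t u))
    (hg : ∀ u, Differentiable ℝ (fun t => g t u)) : pX (f * g) = pX f * g + f * pX g := by
  funext x u
  exact deriv_mul (hf u x) (hg u x)

lemma pX_add (hf : ∀ u, Differentiable ℝ (fun t => f t u))
    (hg : ∀ u, Differentiable ℝ (fun t => g t u)) : pX (f + g) = pX f + pX g := by
  funext x u
  exact deriv_add (hf u x) (hg u x)

lemma pU_mul (hf : ∀ x, Differentiable ℝ (f x)) (hg : ∀ x, Differentiable ℝ (g x)) :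
    pU (f * g) = pU f * g + f * pU g := by
  funext x u
  exact deriv_mul (hf x u) (hg x u)

lemma pU_add (hf : ∀ x, Differentiable ℝ (f x)) (hg : ∀ x, Differentiable ℝ (g x)) :
    pU (f + g) = pU f + pU g := by
  funext x u
  exact deriv_add (hf x u) (hg x u)

lemma pU_sub (hf : ∀ x, Differentiable ℝ (f x)) (hg : ∀ x, Differentiable ℝ (g x)) :
    pU (f - g) = pU f - pU g := by
  funext x u
  exact deriv_sub (hf x u) (hg x u)

lemma pU_const_mul (q : ℝ → ℝ) : pU (fun x u => q x * f x u) = fun x u => q x * pU f x u := by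
  funext x u
  exact deriv_const_mul_field (q x)

lemma pX_pX_mul (hf : ∀ u, ContDiff ℝ 2 (fun t => f t u))
    (hg : ∀ u, ContDiff ℝ 2 (fun t => g t u)) :
    pX (pX (f * g)) = pX (pX f) * g + 2 * (pX f * pX g) + f * pX (pX g) := by
  have df u := (hf u).differentiable two_ne_zero
  have dg u := (hg u).differentiable two_ne_zero
  have dfx : ∀ u, Differentiable ℝ (fun t => pX f t u) := fun u =>
    (hf u).differentiable_deriv_two
  have dgx : ∀ u, Differentiable ℝ (fun t => pX g t u) := fun u =>
    (hg u).differentiable_deriv_two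
  rw [pX_mul df dg, pX_add (f := pX f * g) (g := f * pX g) (fun u => (dfx u).mul (dg u))
    (fun u => (df u).mul (dgx u)), pX_mul dfx dg, pX_mul df dgx]
  ring

lemma pU_pU_mul (hf : ∀ x, ContDiff ℝ 2 (f x)) (hg : ∀ x, ContDiff ℝ 2 (g x)) :
    pU (pU (f * g)) = pU (pU f) * g + 2 * (pU f * pU g) + f * pU (pU g) := by
  have df x := (hf x).differentiable two_ne_zero
  have dg x := (hg x).differentiable two_ne_zero
  have dfu : ∀ x, Differentiable ℝ (pU f x) := fun x => (hf x).differentiable_deriv_two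
  have dgu : ∀ x, Differentiable ℝ (pU g x) := fun x => (hg x).differentiable_deriv_two
  rw [pU_mul df dg, pU_add (f := pU f * g) (g := f * pU g) (fun x => (dfu x).mul (dg x))
    (fun x => (df x).mul (dgu x)), pU_mul dfu dg, pU_mul df dgu]
  ring

lemma ContDiff.of_uncurry_left {n : WithTop ℕ∞} (hf : ContDiff ℝ n (uncurry f)) (u : ℝ) :
    ContDiff ℝ n (fun t => f t u) :=
  hf.comp (contDiff_id.prodMk contDiff_const)

lemma ContDiff.of_uncurry_right {n : WithTop ℕ∞} (hf : ContDiff ℝ n (uncurry f)) (x : ℝ) :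
    ContDiff ℝ n (f x) :=
  hf.comp (contDiff_const.prodMk contDiff_id)

lemma pX_eq_fderiv {x u : ℝ} (hf : DifferentiableAt ℝ (uncurry f) (x, u)) :
    pX f x u = fderiv ℝ (uncurry f) (x, u) (1, 0) :=
  (hf.hasFDerivAt.comp_hasDerivAt (l := uncurry f) x
    ((hasDerivAt_id' x).prodMk (hasDerivAt_const x u))).deriv

lemma pU_eq_fderiv {x u : ℝ} (hf : DifferentiableAt ℝ (uncurry f) (x, u)) :
    pU f x u = fderiv ℝ (uncurry f) (x, u) (0, 1) :=
  (hf.hasFDerivAt.comp_hasDerivAt (l := uncurry f) u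
    ((hasDerivAt_const u x).prodMk (hasDerivAt_id' u))).deriv

lemma uncurry_pX_eq_fderiv (hf : Differentiable ℝ (uncurry f)) :
    uncurry (pX f) = fun p => fderiv ℝ (uncurry f) p (1, 0) := by
  funext ⟨x, u⟩
  exact pX_eq_fderiv (hf (x, u))

lemma uncurry_pU_eq_fderiv (hf : Differentiable ℝ (uncurry f)) :
    uncurry (pU f) = fun p => fderiv ℝ (uncurry f) p (0, 1) := by
  funext ⟨x, u⟩
  exact pU_eq_fderiv (hf (x, u))

lemma ContDiff.uncurry_pX {m n : WithTop ℕ∞} (hf : ContDiff ℝ n (uncurry f))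
    (hmn : m + 1 ≤ n) : ContDiff ℝ m (uncurry (pX f)) := by
  rw [uncurry_pX_eq_fderiv ((hf.of_le (le_add_self.trans hmn)).differentiable one_ne_zero)]
  exact (hf.fderiv_right hmn).clm_apply contDiff_const

lemma ContDiff.uncurry_pU {m n : WithTop ℕ∞} (hf : ContDiff ℝ n (uncurry f))
    (hmn : m + 1 ≤ n) : ContDiff ℝ m (uncurry (pU f)) := by
  rw [uncurry_pU_eq_fderiv ((hf.of_le (le_add_self.trans hmn)).differentiable one_ne_zero)]
  exact (hf.fderiv_right hmn).clm_apply contDiff_const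

lemma fderiv_fderiv_apply {E F : Type*} [NormedAddCommGroup E] [NormedSpace ℝ E]
    [NormedAddCommGroup F] [NormedSpace ℝ F] {Φ : E → F} {p : E}
    (hΦ : DifferentiableAt ℝ (fderiv ℝ Φ) p) (v w : E) :
    fderiv ℝ (fun q => fderiv ℝ Φ q v) p w = fderiv ℝ (fderiv ℝ Φ) p w v := by
  rw [fderiv_clm_apply hΦ (differentiableAt_const v)]
  simp

lemma pU_pX_comm (hf : ContDiff ℝ 2 (uncurry f)) : pU (pX f) = pX (pU f) := by
  funext x u
  have hf1 := hf.differentiable two_ne_zero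
  have hf2 : DifferentiableAt ℝ (fderiv ℝ (uncurry f)) (x, u) :=
    (hf.fderiv_right (m := 1) (by norm_num)).differentiable one_ne_zero _
  rw [pU_eq_fderiv ((hf.uncurry_pX le_rfl).differentiable one_ne_zero _),
    uncurry_pX_eq_fderiv hf1, fderiv_fderiv_apply hf2,
    pX_eq_fderiv ((hf.uncurry_pU le_rfl).differentiable one_ne_zero _),
    uncurry_pU_eq_fderiv hf1, fderiv_fderiv_apply hf2]
  exact hf.contDiffAt.isSymmSndFDerivAt (by simp) _ _

end PartialDerivatives

noncomputable def xOperator (q : ℝ → ℝ) (f : ℝ → ℝ → ℝ) : ℝ → ℝ → ℝ :=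
  pX (pX f) - fun x u => q x * pX f x u

lemma contDiff_xOperator_apply {f : ℝ → ℝ → ℝ} {m n : WithTop ℕ∞}
    (hf : ContDiff ℝ n (uncurry f)) (hmn : m + 2 ≤ n) (q : ℝ → ℝ) (x : ℝ) :
    ContDiff ℝ m (xOperator q f x) := by
  have hfx : ContDiff ℝ (m + 1) (uncurry (pX f)) :=
    hf.uncurry_pX (by rwa [add_assoc, one_add_one_eq_two])
  exact ((hfx.uncurry_pX le_rfl).of_uncurry_right x).sub
    (contDiff_const.mul ((hfx.of_le le_self_add).of_uncurry_right x))

lemma pU_xOperator {f : ℝ → ℝ → ℝ} (hf : ContDiff ℝ 3 (uncurry f)) (q : ℝ → ℝ) :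
    pU (xOperator q f) = xOperator q (pU f) := by
  have hfx : ContDiff ℝ 2 (uncurry (pX f)) := hf.uncurry_pX (by norm_num)
  rw [xOperator, xOperator, pU_sub
      (fun x => ((hfx.uncurry_pX le_rfl).of_uncurry_right x).differentiable one_ne_zero)
      (fun x => ((hfx.of_uncurry_right x).differentiable two_ne_zero).const_mul (q x)),
    pU_const_mul, pU_pX_comm hfx, pU_pX_comm (hf.of_le (by norm_num))]

theorem linearization_identity (ψ a b c : ℝ → ℝ → ℝ) (q : ℝ → ℝ)
    (hψ : ContDiff ℝ 4 (uncurry ψ)) (hψu : ∀ x u, pU ψ x u ≠ 0)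
    (ha : a = pU (pU ψ) / pU ψ) (hb : b = 2 * pX (pU ψ) / pU ψ - fun x _ => q x)
    (hc : c = xOperator q ψ / pU ψ) :
    pU (pU c) - pX (pX a) - pX a * b + pU a * c + pU c * a = 0 := by
  set g := pU ψ
  have hg : ContDiff ℝ 3 (uncurry g) := hψ.uncurry_pU (by norm_num)
  have hg2 : ContDiff ℝ 2 (uncurry g) := hg.of_le (by norm_num)
  have ha2 : ContDiff ℝ 2 (uncurry a) := by
    rw [ha]; exact (hg.uncurry_pU (by norm_num)).div hg2 fun p => hψu p.1 p.2
  have hc2 (x : ℝ) : ContDiff ℝ 2 (c x) := by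
    rw [hc]
    exact (contDiff_xOperator_apply hψ (by norm_num) q x).div (hg2.of_uncurry_right x) (hψu x)
  have hag : a * g = pU g := by
    rw [ha]; funext x u; exact div_mul_cancel₀ _ (hψu x u)
  have hcg : c * g = xOperator q ψ := by
    rw [hc]; funext x u; exact div_mul_cancel₀ _ (hψu x u)
  have hag_x : pX a * g + a * pX g = pX (pU g) := by
    rw [← pX_mul (fun u => (ha2.of_uncurry_left u).differentiable two_ne_zero)
      (fun u => (hg2.of_uncurry_left u).differentiable two_ne_zero), hag]
  have hag_xx : pX (pX a) * g + 2 * (pX a * pX g) + a * pX (pX g) = pX (pX (pU g)) := by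
    rw [← pX_pX_mul ha2.of_uncurry_left hg2.of_uncurry_left, hag]
  have hag_u : pU a * g + a * pU g = pU (pU g) := by
    rw [← pU_mul (fun x => (ha2.of_uncurry_right x).differentiable two_ne_zero)
      (fun x => (hg2.of_uncurry_right x).differentiable two_ne_zero), hag]
  have hcg_u : pU c * g + c * pU g = xOperator q g := by
    rw [← pU_mul (fun x => (hc2 x).differentiable two_ne_zero)
      (fun x => (hg2.of_uncurry_right x).differentiable two_ne_zero), hcg,
      pU_xOperator (hψ.of_le (by norm_num))]
  have hcg_uu : pU (pU c) * g + 2 * (pU c * pU g) + c * pU (pU g) = xOperator q (pU g) := by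
    rw [← pU_pU_mul hc2 hg2.of_uncurry_right, hcg, pU_xOperator (hψ.of_le (by norm_num)),
      pU_xOperator hg]
  funext x u
  have hbg : g x u * b x u = 2 * pX g x u - q x * g x u := by
    rw [hb]
    simp only [Pi.sub_apply, Pi.div_apply, Pi.mul_apply, Pi.ofNat_apply]
    field_simp [hψu x u]
  have e₀ := congrFun₂ hag x u
  have e₁ := congrFun₂ hag_x x u
  have e₂ := congrFun₂ hag_xx x u
  have e₃ := congrFun₂ hag_u x u
  have e₄ := congrFun₂ hcg_u x u
  have e₅ := congrFun₂ hcg_uu x u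
  simp only [xOperator, Pi.mul_apply, Pi.add_apply, Pi.sub_apply, Pi.ofNat_apply]
    at e₀ e₁ e₂ e₃ e₄ e₅ ⊢
  refine (mul_eq_zero.1 ?_).resolve_left (hψu x u)
  linear_combination e₅ - e₂ - pX a x u * hbg + q x * e₁ + c x u * e₃ + 2 * pU c x u * e₀
    - a x u * e₄

theorem second_linearization_condition_general
    (φ : ℝ → ℝ) (ψ a b c : ℝ → ℝ → ℝ)
    (hψ : ContDiff ℝ 4 (fun p : ℝ × ℝ => ψ p.1 p.2))
    (hφx : ∀ x, deriv φ x ≠ 0)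
    (hψu : ∀ x v, pU ψ x v ≠ 0)
    (ha : a = fun x v => pU (pU ψ) x v / pU ψ x v)
    (hb : b = fun x v => (2 * deriv φ x * pX (pU ψ) x v - pU ψ x v * deriv (deriv φ) x)
        / (deriv φ x * pU ψ x v))
    (hc : c = fun x v => (deriv φ x * pX (pX ψ) x v - pX ψ x v * deriv (deriv φ) x)
        / (deriv φ x * pU ψ x v)) :
    ∀ x v, pU (pU c) x v - pX (pX a) x v - pX a x v * b x v
      + pU a x v * c x v + pU c x v * a x v = 0 := by
  have hb' : b = 2 * pX (pU ψ) / pU ψ - fun x _ => deriv (deriv φ) x / deriv φ x := by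
    rw [hb]; funext x v
    simp only [Pi.sub_apply, Pi.div_apply, Pi.mul_apply, Pi.ofNat_apply]
    field_simp [hφx x, hψu x v]
  have hc' : c = xOperator (fun x => deriv (deriv φ) x / deriv φ x) ψ / pU ψ := by
    rw [hc]; funext x v
    simp only [xOperator, Pi.sub_apply, Pi.div_apply]
    field_simp [hφx x, hψu x v]
  exact congrFun₂ (linearization_identity ψ a b c _ hψ hψu ha hb' hc')

/-- If a = ψ_uu/ψ_u, b = (2φ_xψ_xu − ψ_uφ_xx)/(φ_xψ_u) and
c = (φ_xψ_xx − ψ_xφ_xx)/(φ_xψ_u) for C⁴ functions φ (with φ_x ≠ 0) and ψ (with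
ψ_u ≠ 0), then c_uu − a_xx − a_x b + a_u c + c_u a = 0. -/
theorem second_linearization_condition
    (φ : ℝ → ℝ) (ψ a b c : ℝ → ℝ → ℝ)
    (hφ : ContDiff ℝ 4 φ)
    (hψ : ContDiff ℝ 4 (fun p : ℝ × ℝ => ψ p.1 p.2))
    (hφx : ∀ x, deriv φ x ≠ 0)
    (hψu : ∀ x v, pU ψ x v ≠ 0)
    (ha : a = fun x v => pU (pU ψ) x v / pU ψ x v)
    (hb : b = fun x v => (2 * deriv φ x * pX (pU ψ) x v - pU ψ x v * deriv (deriv φ) x)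
        / (deriv φ x * pU ψ x v))
    (hc : c = fun x v => (deriv φ x * pX (pX ψ) x v - pX ψ x v * deriv (deriv φ) x)
        / (deriv φ x * pU ψ x v)) :
    ∀ x v, pU (pU c) x v - pX (pX a) x v - pX a x v * b x v
      + pU a x v * c x v + pU c x v * a x v = 0 :=
  second_linearization_condition_general φ ψ a b c hψ hφx hψu ha hb hc
end

section
/- Let Δ be a nowhere-vanishing C² function satisfying Δ_x = 2Δ(φ_xx/φ_x) + Δb₁ and Δ_z = −2Δa₂, with φ smooth and φ_x ≠ 0. Then equality of mixed partials (Δ_x)_z = (Δ_z)_x yields 2a₂,ₓ + b₁,_z = 0. -/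
/-- partial derivative in x -/
noncomputable def pXv (f : ℝ → ℝ → ℝ → ℝ) : ℝ → ℝ → ℝ → ℝ :=
  fun x y z => deriv (fun t => f t y z) x
/-- partial derivative in z -/
noncomputable def pZ (f : ℝ → ℝ → ℝ → ℝ) : ℝ → ℝ → ℝ → ℝ :=
  fun x y z => deriv (fun t => f x y t) z

private lemma curveX (y z x : ℝ) :
    HasDerivAt (fun t : ℝ => ((t, y, z) : ℝ × ℝ × ℝ)) (1, 0, 0) x :=
  (hasDerivAt_id x).prodMk ((hasDerivAt_const x y).prodMk (hasDerivAt_const x z))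

private lemma curveZ (x y z : ℝ) :
    HasDerivAt (fun t : ℝ => ((x, y, t) : ℝ × ℝ × ℝ)) (0, 0, 1) z :=
  (hasDerivAt_const z x).prodMk ((hasDerivAt_const z y).prodMk (hasDerivAt_id z))

private lemma sliceX {F : ℝ × ℝ × ℝ → ℝ} (hF : Differentiable ℝ F) (x y z : ℝ) :
    HasDerivAt (fun t => F (t, y, z)) (fderiv ℝ F (x, y, z) (1, 0, 0)) x :=
  (hF (x, y, z)).hasFDerivAt.comp_hasDerivAt x (curveX y z x)

private lemma sliceZ {F : ℝ × ℝ × ℝ → ℝ} (hF : Differentiable ℝ F) (x y z : ℝ) :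
    HasDerivAt (fun t => F (x, y, t)) (fderiv ℝ F (x, y, z) (0, 0, 1)) z :=
  (hF (x, y, z)).hasFDerivAt.comp_hasDerivAt z (curveZ x y z)

private lemma slice2X {F : ℝ × ℝ × ℝ → ℝ} (hF : ContDiff ℝ 2 F) (x y z : ℝ)
    (v : ℝ × ℝ × ℝ) :
    HasDerivAt (fun t => fderiv ℝ F (t, y, z) v)
      (fderiv ℝ (fderiv ℝ F) (x, y, z) (1, 0, 0) v) x := by
  have hΦ : Differentiable ℝ (fderiv ℝ F) :=
    (hF.fderiv_right (m := 1) (by norm_num)).differentiable one_ne_zero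
  have h1 : HasDerivAt (fun t => fderiv ℝ F (t, y, z))
      (fderiv ℝ (fderiv ℝ F) (x, y, z) (1, 0, 0)) x :=
    (hΦ (x, y, z)).hasFDerivAt.comp_hasDerivAt x (curveX y z x)
  simpa using h1.clm_apply (hasDerivAt_const x v)

private lemma slice2Z {F : ℝ × ℝ × ℝ → ℝ} (hF : ContDiff ℝ 2 F) (x y z : ℝ)
    (v : ℝ × ℝ × ℝ) :
    HasDerivAt (fun t => fderiv ℝ F (x, y, t) v)
      (fderiv ℝ (fderiv ℝ F) (x, y, z) (0, 0, 1) v) z := by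
  have hΦ : Differentiable ℝ (fderiv ℝ F) :=
    (hF.fderiv_right (m := 1) (by norm_num)).differentiable one_ne_zero
  have h1 : HasDerivAt (fun t => fderiv ℝ F (x, y, t))
      (fderiv ℝ (fderiv ℝ F) (x, y, z) (0, 0, 1)) z :=
    (hΦ (x, y, z)).hasFDerivAt.comp_hasDerivAt z (curveZ x y z)
  simpa using h1.clm_apply (hasDerivAt_const z v)

/-- If Δ is nowhere-vanishing, C², with Δ_x = 2Δ(φ_xx/φ_x) + Δb₁ and Δ_z = −2Δa₂,
then equality of mixed partials yields 2a₂,ₓ + b₁,_z = 0. -/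
theorem mixed_partials_jacobian_xz
    (Δ a₂ b₁ : ℝ → ℝ → ℝ → ℝ) (φ : ℝ → ℝ)
    (hΔ : ContDiff ℝ 2 (fun p : ℝ × ℝ × ℝ => Δ p.1 p.2.1 p.2.2))
    (ha₂ : ContDiff ℝ 2 (fun p : ℝ × ℝ × ℝ => a₂ p.1 p.2.1 p.2.2))
    (hb₁ : ContDiff ℝ 2 (fun p : ℝ × ℝ × ℝ => b₁ p.1 p.2.1 p.2.2))
    (hφ : ContDiff ℝ (⊤ : ℕ∞) φ)
    (hφx : ∀ x, deriv φ x ≠ 0)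
    (hne : ∀ x y z, Δ x y z ≠ 0)
    (hx : ∀ x y z, pXv Δ x y z =
        2 * Δ x y z * (deriv (deriv φ) x / deriv φ x) + Δ x y z * b₁ x y z)
    (hz : ∀ x y z, pZ Δ x y z = -2 * Δ x y z * a₂ x y z) :
    ∀ x y z, 2 * pXv a₂ x y z + pZ b₁ x y z = 0 := by
  intro x y z
  set F : ℝ × ℝ × ℝ → ℝ := fun p => Δ p.1 p.2.1 p.2.2 with hF
  have hΔd : Differentiable ℝ F := hΔ.differentiable (by norm_num)
  have ha₂d : Differentiable ℝ (fun p : ℝ × ℝ × ℝ => a₂ p.1 p.2.1 p.2.2) :=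
    ha₂.differentiable (by norm_num)
  have hb₁d : Differentiable ℝ (fun p : ℝ × ℝ × ℝ => b₁ p.1 p.2.1 p.2.2) :=
    hb₁.differentiable (by norm_num)
  -- pXv Δ as fderiv applied to (1,0,0), everywhere
  have hXΔ : ∀ x' y' z', pXv Δ x' y' z' = fderiv ℝ F (x', y', z') (1, 0, 0) :=
    fun x' y' z' => (sliceX hΔd x' y' z').deriv
  have hZΔ : ∀ x' y' z', pZ Δ x' y' z' = fderiv ℝ F (x', y', z') (0, 0, 1) :=
    fun x' y' z' => (sliceZ hΔd x' y' z').deriv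
  -- mixed second partials agree
  have hsym : fderiv ℝ (fderiv ℝ F) (x, y, z) (0, 0, 1) (1, 0, 0) =
      fderiv ℝ (fderiv ℝ F) (x, y, z) (1, 0, 0) (0, 0, 1) :=
    (hΔ.contDiffAt.isSymmSndFDerivAt (by simp)) _ _
  have key : pZ (pXv Δ) x y z = pXv (pZ Δ) x y z := by
    have e1 : pZ (pXv Δ) x y z = fderiv ℝ (fderiv ℝ F) (x, y, z) (0, 0, 1) (1, 0, 0) := by
      have hfun : (fun t => pXv Δ x y t) = fun t => fderiv ℝ F (x, y, t) (1, 0, 0) :=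
        funext fun t => hXΔ x y t
      show deriv (fun t => pXv Δ x y t) z = _
      rw [hfun]
      exact (slice2Z hΔ x y z _).deriv
    have e2 : pXv (pZ Δ) x y z = fderiv ℝ (fderiv ℝ F) (x, y, z) (1, 0, 0) (0, 0, 1) := by
      have hfun : (fun t => pZ Δ t y z) = fun t => fderiv ℝ F (t, y, z) (0, 0, 1) :=
        funext fun t => hZΔ t y z
      show deriv (fun t => pZ Δ t y z) x = _
      rw [hfun]
      exact (slice2X hΔ x y z _).deriv
    rw [e1, e2, hsym]
  set c : ℝ := deriv (deriv φ) x / deriv φ x with hc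
  -- one-variable HasDerivAt facts
  have hDz : HasDerivAt (fun t => Δ x y t) (pZ Δ x y z) z :=
    (sliceZ hΔd x y z).differentiableAt.hasDerivAt
  have hDx : HasDerivAt (fun t => Δ t y z) (pXv Δ x y z) x :=
    (sliceX hΔd x y z).differentiableAt.hasDerivAt
  have hbz : HasDerivAt (fun t => b₁ x y t) (pZ b₁ x y z) z :=
    (sliceZ hb₁d x y z).differentiableAt.hasDerivAt
  have hax : HasDerivAt (fun t => a₂ t y z) (pXv a₂ x y z) x :=
    (sliceX ha₂d x y z).differentiableAt.hasDerivAt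
  -- compute pZ (pXv Δ)
  have e1 : pZ (pXv Δ) x y z =
      2 * pZ Δ x y z * c + (pZ Δ x y z * b₁ x y z + Δ x y z * pZ b₁ x y z) := by
    have hfun : (fun t => pXv Δ x y t) =
        fun t => 2 * Δ x y t * c + Δ x y t * b₁ x y t := funext fun t => hx x y t
    have h1 : HasDerivAt (fun t => 2 * Δ x y t * c + Δ x y t * b₁ x y t)
        (2 * pZ Δ x y z * c + (pZ Δ x y z * b₁ x y z + Δ x y z * pZ b₁ x y z)) z :=
      ((hDz.const_mul 2).mul_const c).add (hDz.mul hbz)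
    show deriv (fun t => pXv Δ x y t) z = _
    rw [hfun]
    exact h1.deriv
  -- compute pXv (pZ Δ)
  have e2 : pXv (pZ Δ) x y z =
      -2 * pXv Δ x y z * a₂ x y z + -2 * Δ x y z * pXv a₂ x y z := by
    have hfun : (fun t => pZ Δ t y z) =
        fun t => -2 * Δ t y z * a₂ t y z := funext fun t => hz t y z
    have h1 : HasDerivAt (fun t => -2 * Δ t y z * a₂ t y z)
        (-2 * pXv Δ x y z * a₂ x y z + -2 * Δ x y z * pXv a₂ x y z) x := by
      have := (hDx.const_mul (-2)).mul hax
      simpa only [Pi.mul_def, mul_assoc] using this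
    show deriv (fun t => pZ Δ t y z) x = _
    rw [hfun]
    exact h1.deriv
  have hmain : Δ x y z * (2 * pXv a₂ x y z + pZ b₁ x y z) = 0 := by
    have h := key
    rw [e1, e2, hx x y z, hz x y z] at h
    rw [hc] at h
    ring_nf at h ⊢
    linarith
  rcases mul_eq_zero.1 hmain with h | h
  · exact absurd h (hne x y z)
  · exact h
end
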